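/- Let G be a finite abelian group and D a diagram on G such that each D(H) is closed under complex conjugation and 1_H ∉ D(H) for all H ≤ G. Let J = J[D]. If J satisfies R_K^H(J_K^H(U)) = U for all K ≤ H ≤ G and all U ⊆ K̂, then J is a sub-inductor on G and Res_J(H) ∩ D(H) = ∅ for every H ≤ G. -/
import Mathlib


open scoped Classical

/-- The character group of `G`: monoid homomorphisms to `ℂˣ`. -/
abbrev CharGp (G : Type*) [Group G] := G →* ℂˣ

/-- Complex conjugation acting on characters: `χ ↦ χ̄`. -/
noncomputable def charConj {G : Type*} [Group G] (χ : CharGp G) : CharGp G :=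
  (Units.map (starRingEnd ℂ).toMonoidHom).comp χ

/-- Restriction of characters along an inclusion of subgroups: `R_K^H` on elements. -/
def resChar {G : Type*} [Group G] {K H : Subgroup G} (h : K ≤ H) (χ : CharGp H) : CharGp K :=
  χ.comp (Subgroup.inclusion h)

/-- Restriction of a character of `G` itself to a subgroup. -/
def resCharTop {G : Type*} [Group G] (K : Subgroup G) (χ : CharGp G) : CharGp K :=
  χ.comp K.subtype

/-- A transfer system on a finite group `G`: a partial order on subgroups refining
inclusion, closed under conjugation and under intersection-pullback. -/
structure TransferSystem (G : Type*) [Group G] where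
  rel : Subgroup G → Subgroup G → Prop
  le_of_rel : ∀ {K H : Subgroup G}, rel K H → K ≤ H
  refl : ∀ H : Subgroup G, rel H H
  trans : ∀ {K L H : Subgroup G}, rel K L → rel L H → rel K H
  conj : ∀ {K H : Subgroup G} (g : G), rel K H →
    rel (K.map (MulAut.conj g).toMonoidHom) (H.map (MulAut.conj g).toMonoidHom)
  inf_rel : ∀ {K H : Subgroup G} (L : Subgroup G), rel K H → L ≤ H → rel (K ⊓ L) L

/-- A transfer system is saturated if `(K,H) ∈ ℛ` and `K ≤ L ≤ H` imply `(L,H) ∈ ℛ`. -/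
def TransferSystem.Saturated {G : Type*} [Group G] (R : TransferSystem G) : Prop :=
  ∀ ⦃K L H : Subgroup G⦄, R.rel K H → K ≤ L → L ≤ H → R.rel L H

/-- A subgroup `H` is `ℛ`-cofibrant if there is no proper `K < H` with `(K,H) ∈ ℛ`. -/
def TransferSystem.Cofibrant {G : Type*} [Group G] (R : TransferSystem G)
    (H : Subgroup G) : Prop :=
  ¬ ∃ K : Subgroup G, K < H ∧ R.rel K H

/-- `𝒰_G`: subsets of `Ĝ` containing the trivial character and closed under conjugation. -/
def UnivSet (G : Type*) [Group G] : Set (Set (CharGp G)) :=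
  {U | (1 : CharGp G) ∈ U ∧ ∀ χ ∈ U, charConj χ ∈ U}

/-- `Tr(U)`: the relation `{(K,H) : K ≤ H and I_K^H(R_K^G(U)) ⊆ R_H^G(U)}`. -/
def TrRel {G : Type*} [Group G] (U : Set (CharGp G)) (K H : Subgroup G) : Prop :=
  ∃ h : K ≤ H, resChar h ⁻¹' (resCharTop K '' U) ⊆ resCharTop H '' U

/-- The sub-inductor axioms for a family `J_K^H : 𝒫(K̂) → 𝒫(Ĥ)`. -/
structure IsSubInductor {G : Type*} [CommGroup G]
    (J : ∀ K H : Subgroup G, K ≤ H → Set (CharGp K) → Set (CharGp H)) : Prop where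
  conj_comm : ∀ {K H : Subgroup G} (h : K ≤ H) (U : Set (CharGp K)),
    J K H h (charConj '' U) = charConj '' J K H h U
  union_comm : ∀ {K H : Subgroup G} (h : K ≤ H) (s : Set (Set (CharGp K))),
    J K H h (⋃₀ s) = ⋃ U ∈ s, J K H h U
  comp : ∀ {K L H : Subgroup G} (h1 : K ≤ L) (h2 : L ≤ H) (U : Set (CharGp K)),
    J L H h2 (J K L h1 U) = J K H (h1.trans h2) U
  res_cover : ∀ {K H : Subgroup G} (h : K ≤ H) (U : Set (CharGp K)),
    resChar h '' J K H h U = U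
  res_le : ∀ {K L H : Subgroup G} (hK : K ≤ H) (hL : L ≤ H) (U : Set (CharGp L)),
    resChar hK '' J L H hL U ⊆
      J (K ⊓ L) K inf_le_left (resChar (inf_le_right : K ⊓ L ≤ L) '' U)
  one_mem : ∀ {K H : Subgroup G} (h : K ≤ H), (1 : CharGp H) ∈ J K H h {1}

/-- The residue of a sub-inductor: `Res_J(H) = ⋃_{K < H} J_K^H(K̂)`. -/
def resJ {G : Type*} [CommGroup G]
    (J : ∀ K H : Subgroup G, K ≤ H → Set (CharGp K) → Set (CharGp H))
    (H : Subgroup G) : Set (CharGp H) :=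
  ⋃ (K : Subgroup G) (h : K < H), J K H h.le Set.univ

/-- A diagram is `R`-stable if `R_K^H(D(H)) ⊆ D(K)` for all `K ≤ H`. -/
def RStable {G : Type*} [CommGroup G] (D : ∀ H : Subgroup G, Set (CharGp H)) : Prop :=
  ∀ {K H : Subgroup G} (h : K ≤ H), resChar h '' D H ⊆ D K

/-- A tight pair: an `R`-stable conjugation-invariant diagram together with a
sub-inductor satisfying the two non-containment constraints. -/
structure IsTightPair {G : Type*} [CommGroup G]
    (D : ∀ H : Subgroup G, Set (CharGp H))
    (J : ∀ K H : Subgroup G, K ≤ H → Set (CharGp K) → Set (CharGp H)) : Prop where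
  rstable : RStable D
  subind : IsSubInductor J
  conj_inv : ∀ H : Subgroup G, ∀ χ ∈ D H, charConj χ ∈ D H
  ind_not_le : ∀ {K H : Subgroup G} (h : K < H),
    ¬ (resChar h.le ⁻¹' D K ⊆ D H ∪ resJ J H)
  not_res : ∀ H : Subgroup G, ¬ (D H ⊆ resJ J H)

/-- The family `J[D]` associated to a diagram `D`:
`J[D]_K^H(U) = I_K^H(U) \ ⋃_{L ∈ (K,H]} I_L^H(D(L))`. -/
def JD {G : Type*} [CommGroup G] (D : ∀ H : Subgroup G, Set (CharGp H))
    (K H : Subgroup G) (h : K ≤ H) (U : Set (CharGp K)) : Set (CharGp H) :=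
  (resChar h ⁻¹' U) \
    ⋃ (L : Subgroup G) (hL : L ≤ H) (_ : ¬ L ≤ K), resChar hL ⁻¹' D L


lemma charConj_charConj {G : Type*} [Group G] (χ : CharGp G) : charConj (charConj χ) = χ := by
  ext x; simp [charConj]

lemma mem_JD' {G : Type*} [CommGroup G] (D : ∀ H : Subgroup G, Set (CharGp H))
    {K H : Subgroup G} (h : K ≤ H) (U : Set (CharGp K)) (χ : CharGp H) :
    χ ∈ JD D K H h U ↔ resChar h χ ∈ U ∧
      ∀ (L : Subgroup G) (hL : L ≤ H), ¬ L ≤ K → resChar hL χ ∉ D L := by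
  simp only [JD, Set.mem_diff, Set.mem_preimage, Set.mem_iUnion, not_exists]

/-- **Lemma.** Let `D` be a conjugation-invariant diagram with `1_H ∉ D(H)` for all
`H`, and `J = J[D]`. If `J` satisfies the covering axiom `R_K^H(J_K^H(U)) = U`,
then `J` is a sub-inductor and `Res_J(H) ∩ D(H) = ∅` for every `H`. -/
theorem JD_subinductor (G : Type*) [CommGroup G] [Fintype G]
    (D : ∀ H : Subgroup G, Set (CharGp H))
    (hconj : ∀ H : Subgroup G, ∀ χ ∈ D H, charConj χ ∈ D H)
    (hone : ∀ H : Subgroup G, (1 : CharGp H) ∉ D H)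
    (hcover : ∀ (K H : Subgroup G) (h : K ≤ H) (U : Set (CharGp K)),
      resChar h '' JD D K H h U = U) :
    IsSubInductor (JD D) ∧ ∀ H : Subgroup G, resJ (JD D) H ∩ D H = ∅ := by
  have hDconjiff : ∀ (L : Subgroup G) (χ : CharGp L), charConj χ ∈ D L ↔ χ ∈ D L := by
    intro L χ
    constructor
    · intro hx; have := hconj L _ hx; rwa [charConj_charConj] at this
    · exact hconj L χ
  constructor
  · constructor
    · -- conj_comm
      intro K H h U
      ext χ
      simp only [mem_JD', Set.mem_image]
      constructor
      · rintro ⟨⟨u, hu, hru⟩, hP⟩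
        refine ⟨charConj χ, ⟨?_, ?_⟩, charConj_charConj χ⟩
        · have h1 : resChar h (charConj χ) = charConj (resChar h χ) := rfl
          rw [h1, ← hru, charConj_charConj]; exact hu
        · intro L hL hLK
          have h1 : resChar hL (charConj χ) = charConj (resChar hL χ) := rfl
          rw [h1, hDconjiff]
          exact hP L hL hLK
      · rintro ⟨ψ, ⟨hu, hP⟩, rfl⟩
        refine ⟨⟨resChar h ψ, hu, rfl⟩, ?_⟩
        intro L hL hLK
        have h1 : resChar hL (charConj ψ) = charConj (resChar hL ψ) := rfl
        rw [h1, hDconjiff]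
        exact hP L hL hLK
    · -- union_comm
      intro K H h s
      ext χ
      simp only [mem_JD', Set.mem_sUnion, Set.mem_iUnion]
      tauto
    · -- comp
      intro K L H h1 h2 U
      ext χ
      simp only [mem_JD']
      constructor
      · rintro ⟨⟨hU, hPL⟩, hPH⟩
        refine ⟨hU, ?_⟩
        intro M hM hMK
        by_cases hML : M ≤ L
        · exact hPL M hML hMK
        · exact hPH M hM hML
      · rintro ⟨hU, hP⟩
        exact ⟨⟨hU, fun M hML hMK => hP M (hML.trans h2) hMK⟩,
          fun M hM hML => hP M hM (fun hMK => hML (hMK.trans h1))⟩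
    · -- res_cover
      intro K H h U
      exact hcover K H h U
    · -- res_le
      intro K L H hK hL U
      rintro _ ⟨χ, hχ, rfl⟩
      rw [mem_JD'] at hχ ⊢
      obtain ⟨hU, hP⟩ := hχ
      refine ⟨⟨resChar hL χ, hU, rfl⟩, ?_⟩
      intro M hM hMKL
      have hML : ¬ M ≤ L := fun hML' => hMKL (le_inf hM hML')
      exact hP M (hM.trans hK) hML
    · -- one_mem
      intro K H h
      rw [mem_JD']
      exact ⟨rfl, fun L hL _ => hone L⟩
  · -- residue disjoint
    intro H
    ext χ
    simp only [Set.mem_inter_iff, Set.mem_empty_iff_false, iff_false, not_and]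
    intro hres hD
    simp only [resJ, Set.mem_iUnion] at hres
    obtain ⟨K, hKH, hχ⟩ := hres
    rw [mem_JD'] at hχ
    exact hχ.2 H le_rfl hKH.not_ge hD
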